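/- Let x_l < x_r, let β be twice continuously differentiable on [x_l, x_r] with β(x) ≥ β_0 > 0 for all x, let q and f be continuously differentiable on [x_l, x_r], and let u be three times continuously differentiable on [x_l, x_r] satisfying β(x)·u''(x) + β'(x)·u'(x) − q(x)·u(x) + f(x) = 0 for all x. Then there exists a constant C > 0 such that for every n ≥ 1 and every partition x_l = x_0 < x_1 < ... < x_n = x_r with mesh size h = max_k (x_{k+1} − x_k), the function v_h^{new} defined on each element [x_k, x_{k+1}] by v_h^{new}(x) = u_I^k(x) − (β'(x)/(2β(x)))·(x−x_k)(x−x_{k+1})·(u(x_{k+1})−u(x_k))/(x_{k+1}−x_k) + (q(x)/(2β(x)))·(x−x_k)(x−x_{k+1})·u_I^k(x) − (f(x)/(2β(x)))·(x−x_k)(x−x_{k+1}), with u_I^k the linear interpolant of u on [x_k, x_{k+1}], satisfies |u'(x) − (v_h^{new})'(x)| ≤ C·h^2 for every x lying in the open interior (x_k, x_{k+1}) of any element. -/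

import Mathlib

/-!
Put `B = β' / (2β)`, `Q = q / (2β)`, `F = f / (2β)`, so that the equation reads
`u''/2 = Q u - B u' - F`. On an element `[a, b]` let `L` be the linear interpolant of `u` and `s`
its slope; then `v_h^{new} = L + (τ - a)(τ - b) g`, where the bubble coefficient `g = Q L - B s - F`
is the equation's value of `u''/2` with `u, u'` replaced by `L, s`. At `t ∈ (a, b)`,
`u' - (v_h^{new})' = (u' - s - u'' (2t - a - b)/2) - (2t - a - b)(g - u''/2) - (t - a)(t - b) g'`.
The first term is `O(h²)` by Taylor expansion of `u` about `t`; the second is `O(h²)` because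
`g - u''/2 = Q (L - u) - B (s - u')` with `L - u = O(h²)` and `s - u' = O(h)`; and `g'` is
bounded. The constants come from bounds on the data over the compact interval `[x_l, x_r]`.
-/

open Set Filter Topology

lemma IsCompact.exists_pos_bound_of_continuousOn_list {X : Type*} [TopologicalSpace X] {s : Set X}
    (hs : IsCompact s) (l : List (X → ℝ)) (hl : ∀ φ ∈ l, ContinuousOn φ s) :
    ∃ M > 0, ∀ φ ∈ l, ∀ t ∈ s, |φ t| ≤ M := by
  induction l with
  | nil => exact ⟨1, one_pos, by simp⟩
  | cons φ l ih =>
    simp only [List.mem_cons, forall_eq_or_imp] at hl ⊢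
    obtain ⟨M, hM0, hM⟩ := ih hl.2
    obtain ⟨N, hN⟩ := hs.exists_bound_of_continuousOn hl.1
    exact ⟨max M N, lt_max_of_lt_left hM0, fun t ht => (hN t ht).trans (le_max_right _ _),
      fun ψ hψ t ht => (hM ψ hψ t ht).trans (le_max_left _ _)⟩

lemma exists_hasDerivWithinAt_div {s : Set ℝ} {φ φ' ψ ψ' : ℝ → ℝ}
    (hφ : ∀ t ∈ s, HasDerivWithinAt φ (φ' t) s t) (hφ' : ContinuousOn φ' s)
    (hψ : ∀ t ∈ s, HasDerivWithinAt ψ (ψ' t) s t) (hψ' : ContinuousOn ψ' s)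
    (hψ0 : ∀ t ∈ s, ψ t ≠ 0) :
    ∃ c' : ℝ → ℝ, (∀ t ∈ s, HasDerivWithinAt (fun τ => φ τ / ψ τ) (c' t) s t) ∧
      ContinuousOn c' s := by
  have hφc : ContinuousOn φ s := fun t ht => (hφ t ht).continuousWithinAt
  have hψc : ContinuousOn ψ s := fun t ht => (hψ t ht).continuousWithinAt
  exact ⟨fun t => (φ' t * ψ t - φ t * ψ' t) / ψ t ^ 2,
    fun t ht => (hφ t ht).div (hψ t ht) (hψ0 t ht),
    ((hφ'.mul hψc).sub (hφc.mul hψ')).div (hψc.pow 2) fun t ht => pow_ne_zero 2 (hψ0 t ht)⟩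

lemma Icc_succ_subset_Icc_of_le_succ {x : ℕ → ℝ} {n k : ℕ} (hx : ∀ k < n, x k ≤ x (k + 1))
    (hk : k < n) : Icc (x k) (x (k + 1)) ⊆ Icc (x 0) (x n) := by
  have hmono : MonotoneOn x (Iic n) :=
    monotoneOn_of_le_add_one ordConnected_Iic fun i _ _ hi => hx i hi
  exact Icc_subset_Icc (hmono (by simp) (by simp; omega) (by omega))
    (hmono (by simp; omega) (by simp) (by omega))

lemma abs_sub_le_of_hasDerivWithinAt_Icc {G G' : ℝ → ℝ} {a b c x y : ℝ}
    (hG : ∀ σ ∈ Icc a b, HasDerivWithinAt G (G' σ) (Icc a b) σ)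
    (hc : ∀ σ ∈ Icc a b, |G' σ| ≤ c) (hx : x ∈ Icc a b) (hy : y ∈ Icc a b) :
    |G y - G x| ≤ c * (b - a) := by
  have h := (convex_Icc a b).norm_image_sub_le_of_norm_hasDerivWithin_le hG
    (fun σ hσ => (Real.norm_eq_abs _).trans_le (hc σ hσ)) hx hy
  rw [Real.norm_eq_abs, Real.norm_eq_abs] at h
  refine h.trans (mul_le_mul_of_nonneg_left ?_ ((abs_nonneg _).trans (hc x hx)))
  rw [abs_le]; constructor <;> linarith [hx.1, hx.2, hy.1, hy.2]

noncomputable def linInterp (u : ℝ → ℝ) (a b τ : ℝ) : ℝ :=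
  u a * (b - τ) / (b - a) + u b * (τ - a) / (b - a)

lemma hasDerivAt_linInterp (u : ℝ → ℝ) (a b t : ℝ) :
    HasDerivAt (linInterp u a b) (slope u a b) t := by
  have h := ((((hasDerivAt_id' t).const_sub b).const_mul (u a)).div_const (b - a)).add
    ((((hasDerivAt_id' t).sub_const a).const_mul (u b)).div_const (b - a))
  exact h.congr_deriv (by rw [slope_def_field]; ring)

lemma abs_linInterp_le {u : ℝ → ℝ} {a b t M : ℝ} (hab : a < b) (ha : |u a| ≤ M) (hb : |u b| ≤ M)
    (ht : t ∈ Icc a b) : |linInterp u a b t| ≤ M := by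
  have hba := sub_pos.2 hab
  have hbt := sub_nonneg.2 ht.2
  have hta := sub_nonneg.2 ht.1
  rw [linInterp, ← add_div, abs_div, abs_of_pos hba, div_le_iff₀ hba]
  calc |u a * (b - t) + u b * (t - a)| ≤ |u a| * (b - t) + |u b| * (t - a) := by
        grw [abs_add_le, abs_mul, abs_mul, abs_of_nonneg hbt, abs_of_nonneg hta]
    _ ≤ M * (b - t) + M * (t - a) := by gcongr
    _ = M * (b - a) := by ring

noncomputable def bubbleCoeff (u B Q F : ℝ → ℝ) (a b τ : ℝ) : ℝ :=
  Q τ * linInterp u a b τ - B τ * slope u a b - F τ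

/-- With `B = β' / (2β)`, `Q = q / (2β)`, `F = f / (2β)` this is the paper's `v_h^{new}` on the
element `[a, b]`. -/
noncomputable def modInterp (u B Q F : ℝ → ℝ) (a b τ : ℝ) : ℝ :=
  linInterp u a b τ + (τ - a) * (τ - b) * bubbleCoeff u B Q F a b τ

section ModInterp

variable {u B Q F : ℝ → ℝ} {a b t : ℝ}

lemma hasDerivAt_modInterp {B' Q' F' : ℝ} (hB : HasDerivAt B B' t) (hQ : HasDerivAt Q Q' t)
    (hF : HasDerivAt F F' t) :
    HasDerivAt (modInterp u B Q F a b)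
      (slope u a b + (2 * t - a - b) * bubbleCoeff u B Q F a b t + (t - a) * (t - b) *
        (Q' * linInterp u a b t + Q t * slope u a b - B' * slope u a b - F')) t := by
  have hL := hasDerivAt_linInterp u a b t
  have hg : HasDerivAt (bubbleCoeff u B Q F a b)
      (Q' * linInterp u a b t + Q t * slope u a b - B' * slope u a b - F') t :=
    ((hQ.mul hL).sub (hB.mul_const _)).sub hF
  have hquad : HasDerivAt (fun τ => (τ - a) * (τ - b)) (2 * t - a - b) t :=
    (((hasDerivAt_id' t).sub_const a).mul ((hasDerivAt_id' t).sub_const b)).congr_deriv (by ring)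
  exact (hL.add (hquad.mul hg)).congr_deriv (add_assoc _ _ _).symm

lemma bubbleCoeff_sub_half {u' u'' : ℝ → ℝ}
    (hode : u'' t = 2 * (Q t * u t - B t * u' t - F t)) :
    bubbleCoeff u B Q F a b t - u'' t / 2 =
      Q t * (linInterp u a b t - u t) - B t * (slope u a b - u' t) := by
  rw [bubbleCoeff, hode]; ring

end ModInterp

section Taylor

variable {u u' u'' u''' : ℝ → ℝ} {a b t M : ℝ}
  (hu : ∀ σ ∈ Icc a b, HasDerivWithinAt u (u' σ) (Icc a b) σ)
  (hu' : ∀ σ ∈ Icc a b, HasDerivWithinAt u' (u'' σ) (Icc a b) σ)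
  (hu'' : ∀ σ ∈ Icc a b, HasDerivWithinAt u'' (u''' σ) (Icc a b) σ)
include hu

lemma abs_slope_le (hab : a < b) (hM : ∀ σ ∈ Icc a b, |u' σ| ≤ M) : |slope u a b| ≤ M := by
  have h := abs_sub_le_of_hasDerivWithinAt_Icc hu hM (left_mem_Icc.2 hab.le)
    (right_mem_Icc.2 hab.le)
  rwa [slope_def_field, abs_div, abs_of_pos (sub_pos.2 hab), div_le_iff₀ (sub_pos.2 hab)]

include hu'

lemma abs_deriv_sub_slope_le (hab : a < b) (hM : ∀ σ ∈ Icc a b, |u'' σ| ≤ M)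
    (ht : t ∈ Icc a b) : |u' t - slope u a b| ≤ M * (b - a) := by
  have hba := sub_pos.2 hab
  have hG : ∀ σ ∈ Icc a b, HasDerivWithinAt (fun τ => u τ - u' t * τ) (u' σ - u' t) (Icc a b) σ :=
    fun σ hσ => ((hu σ hσ).sub ((hasDerivAt_id' σ).const_mul (u' t)).hasDerivWithinAt).congr_deriv
      (by ring)
  have hG' : ∀ σ ∈ Icc a b, |u' σ - u' t| ≤ M * (b - a) :=
    fun σ hσ => abs_sub_le_of_hasDerivWithinAt_Icc hu' hM ht hσ
  have h := abs_sub_le_of_hasDerivWithinAt_Icc hG hG' (left_mem_Icc.2 hab.le)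
    (right_mem_Icc.2 hab.le)
  refine le_of_mul_le_mul_right ?_ hba
  calc |u' t - slope u a b| * (b - a) = |(u' t - slope u a b) * (b - a)| := by
        rw [abs_mul, abs_of_pos hba]
    _ = |u b - u' t * b - (u a - u' t * a)| := by
        rw [slope_def_field, ← abs_neg]; congr 1; field_simp; ring
    _ ≤ M * (b - a) * (b - a) := h

lemma abs_sub_linInterp_le (hab : a < b) (hM : ∀ σ ∈ Icc a b, |u'' σ| ≤ M)
    (ht : t ∈ Icc a b) : |u t - linInterp u a b t| ≤ M * (b - a) ^ 2 := by
  have hG : ∀ σ ∈ Icc a b, HasDerivWithinAt (fun τ => u τ - linInterp u a b τ)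
      (u' σ - slope u a b) (Icc a b) σ :=
    fun σ hσ => (hu σ hσ).sub (hasDerivAt_linInterp u a b σ).hasDerivWithinAt
  have h := abs_sub_le_of_hasDerivWithinAt_Icc hG
    (fun σ hσ => abs_deriv_sub_slope_le hu hu' hab hM hσ) (left_mem_Icc.2 hab.le) ht
  have ha : linInterp u a b a = u a := by
    rw [linInterp]; field_simp [(sub_pos.2 hab).ne']; ring
  rw [ha, sub_self, sub_zero] at h
  linarith

lemma abs_bubbleCoeff_sub_half_le {B Q F : ℝ → ℝ} {K : ℝ} (hab : a < b)
    (hM : ∀ σ ∈ Icc a b, |u'' σ| ≤ M) (hB : |B t| ≤ K) (hQ : |Q t| ≤ K)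
    (hode : u'' t = 2 * (Q t * u t - B t * u' t - F t)) (ht : t ∈ Icc a b) :
    |bubbleCoeff u B Q F a b t - u'' t / 2| ≤ K * (M * (b - a) ^ 2) + K * (M * (b - a)) := by
  have hK : 0 ≤ K := (abs_nonneg _).trans hB
  have hLu : |linInterp u a b t - u t| ≤ M * (b - a) ^ 2 := by
    rw [abs_sub_comm]; exact abs_sub_linInterp_le hu hu' hab hM ht
  have hsu : |slope u a b - u' t| ≤ M * (b - a) := by
    rw [abs_sub_comm]; exact abs_deriv_sub_slope_le hu hu' hab hM ht
  rw [bubbleCoeff_sub_half hode]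
  grw [abs_sub, abs_mul, abs_mul, hQ, hB, hLu, hsu]

include hu''

lemma abs_deriv_sub_slope_sub_le (hab : a < b) (hM : ∀ σ ∈ Icc a b, |u''' σ| ≤ M)
    (ht : t ∈ Icc a b) :
    |u' t - slope u a b - u'' t * (2 * t - a - b) / 2| ≤ M * (b - a) ^ 2 := by
  have hba := sub_pos.2 hab
  have hG : ∀ σ ∈ Icc a b, HasDerivWithinAt (fun τ => u τ - u' t * τ - u'' t * (τ - t) ^ 2 / 2)
      (u' σ - u' t - u'' t * (σ - t)) (Icc a b) σ := by
    intro σ hσ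
    have h := ((hu σ hσ).sub ((hasDerivAt_id' σ).const_mul (u' t)).hasDerivWithinAt).sub
      (((((hasDerivAt_id' σ).sub_const t).pow 2).const_mul (u'' t)).div_const 2).hasDerivWithinAt
    exact h.congr_deriv (by push_cast; ring)
  have hG' : ∀ σ ∈ Icc a b, |u' σ - u' t - u'' t * (σ - t)| ≤ M * (b - a) * (b - a) := by
    intro σ hσ
    have hH : ∀ ρ ∈ Icc a b, HasDerivWithinAt (fun τ => u' τ - u'' t * τ)
        (u'' ρ - u'' t) (Icc a b) ρ :=
      fun ρ hρ => ((hu' ρ hρ).sub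
        ((hasDerivAt_id' ρ).const_mul (u'' t)).hasDerivWithinAt).congr_deriv (by ring)
    have h := abs_sub_le_of_hasDerivWithinAt_Icc hH
      (fun ρ hρ => abs_sub_le_of_hasDerivWithinAt_Icc hu'' hM ht hρ) ht hσ
    convert h using 2; ring
  have h := abs_sub_le_of_hasDerivWithinAt_Icc hG hG' (left_mem_Icc.2 hab.le)
    (right_mem_Icc.2 hab.le)
  refine le_of_mul_le_mul_right ?_ hba
  calc |u' t - slope u a b - u'' t * (2 * t - a - b) / 2| * (b - a)
        = |(u' t - slope u a b - u'' t * (2 * t - a - b) / 2) * (b - a)| := by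
        rw [abs_mul, abs_of_pos hba]
    _ = |u b - u' t * b - u'' t * (b - t) ^ 2 / 2
          - (u a - u' t * a - u'' t * (a - t) ^ 2 / 2)| := by
        rw [slope_def_field, ← abs_neg]; congr 1; field_simp; ring
    _ ≤ M * (b - a) ^ 2 * (b - a) := by linarith

end Taylor

theorem abs_deriv_sub_deriv_modInterp_le {s : Set ℝ}
    {u u' u'' u''' B B' Q Q' F F' : ℝ → ℝ} {a b t M : ℝ}
    (hu : ∀ σ ∈ s, HasDerivWithinAt u (u' σ) s σ)
    (hu' : ∀ σ ∈ s, HasDerivWithinAt u' (u'' σ) s σ)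
    (hu'' : ∀ σ ∈ s, HasDerivWithinAt u'' (u''' σ) s σ)
    (hB : ∀ σ ∈ s, HasDerivWithinAt B (B' σ) s σ)
    (hQ : ∀ σ ∈ s, HasDerivWithinAt Q (Q' σ) s σ)
    (hF : ∀ σ ∈ s, HasDerivWithinAt F (F' σ) s σ)
    (hM : ∀ φ ∈ [u, u', u'', u''', B, Q, B', Q', F'], ∀ σ ∈ s, |φ σ| ≤ M)
    (hode : ∀ σ ∈ s, u'' σ = 2 * (Q σ * u σ - B σ * u' σ - F σ))
    (hs : Icc a b ⊆ s) (ht : t ∈ Ioo a b) :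
    |u' t - deriv (modInterp u B Q F a b) t| ≤
      (M + M * M * (b - a + 1) + M * (3 * M + 1)) * (b - a) ^ 2 := by
  have hab : a < b := ht.1.trans ht.2
  have htI : t ∈ Icc a b := Ioo_subset_Icc_self ht
  have hsnhds : s ∈ 𝓝 t := mem_of_superset (Ioo_mem_nhds ht.1 ht.2) (Ioo_subset_Icc_self.trans hs)
  have restrict : ∀ {φ φ' : ℝ → ℝ}, (∀ σ ∈ s, HasDerivWithinAt φ (φ' σ) s σ) →
      ∀ σ ∈ Icc a b, HasDerivWithinAt φ (φ' σ) (Icc a b) σ :=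
    fun h σ hσ => (h σ (hs hσ)).mono hs
  have bound : ∀ φ ∈ [u, u', u'', u''', B, Q, B', Q', F'], ∀ σ ∈ Icc a b, |φ σ| ≤ M :=
    fun φ hφ σ hσ => hM φ hφ σ (hs hσ)
  simp only [List.mem_cons, List.not_mem_nil, or_false, forall_eq_or_imp, forall_eq] at bound
  obtain ⟨hMu, hMu', hMu'', hMu''', hMB, hMQ, hMB', hMQ', hMF'⟩ := bound
  rw [(hasDerivAt_modInterp ((hB t (hs htI)).hasDerivAt hsnhds) ((hQ t (hs htI)).hasDerivAt hsnhds)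
    ((hF t (hs htI)).hasDerivAt hsnhds)).deriv]
  have hM0 : 0 ≤ M := (abs_nonneg _).trans (hMu t htI)
  have hba : 0 ≤ b - a := sub_nonneg.2 hab.le
  have hA := abs_deriv_sub_slope_sub_le (restrict hu) (restrict hu') (restrict hu'') hab hMu''' htI
  have hg := abs_bubbleCoeff_sub_half_le (restrict hu) (restrict hu') hab hMu'' (hMB t htI)
    (hMQ t htI) (hode t (hs htI)) htI
  set dg := Q' t * linInterp u a b t + Q t * slope u a b - B' t * slope u a b - F' t
  have hg' : |dg| ≤ M * M + M * M + M * M + M := by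
    have hL := abs_linInterp_le hab (hMu a (left_mem_Icc.2 hab.le))
      (hMu b (right_mem_Icc.2 hab.le)) htI
    grw [abs_sub, abs_sub, abs_add_le, abs_mul, abs_mul, abs_mul, hMQ' t htI, hMQ t htI,
      hMB' t htI, hMF' t htI, hL, abs_slope_le (restrict hu) hab hMu']
  have h2t : |2 * t - a - b| ≤ b - a := by
    rw [abs_le]; constructor <;> linarith [ht.1, ht.2]
  have hbub : |(t - a) * (t - b)| ≤ (b - a) ^ 2 := by
    rw [abs_mul, sq]; gcongr <;> rw [abs_le] <;> constructor <;> linarith [ht.1, ht.2]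
  calc _ = |(u' t - slope u a b - u'' t * (2 * t - a - b) / 2)
        - (2 * t - a - b) * (bubbleCoeff u B Q F a b t - u'' t / 2)
        - (t - a) * (t - b) * dg| := by congr 1; ring
    _ ≤ M * (b - a) ^ 2 + (b - a) * (M * (M * (b - a) ^ 2) + M * (M * (b - a)))
        + (b - a) ^ 2 * (M * M + M * M + M * M + M) := by
        grw [abs_sub, abs_sub, abs_mul, abs_mul, hA, h2t, hg, hbub, hg']
    _ = _ := by ring

theorem exists_abs_deriv_sub_deriv_modInterp_le {xl xr : ℝ} (hlr : xl < xr)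
    {u u' u'' u''' B B' Q Q' F F' : ℝ → ℝ}
    (hu : ∀ σ ∈ Icc xl xr, HasDerivWithinAt u (u' σ) (Icc xl xr) σ)
    (hu' : ∀ σ ∈ Icc xl xr, HasDerivWithinAt u' (u'' σ) (Icc xl xr) σ)
    (hu'' : ∀ σ ∈ Icc xl xr, HasDerivWithinAt u'' (u''' σ) (Icc xl xr) σ)
    (hu'''c : ContinuousOn u''' (Icc xl xr))
    (hB : ∀ σ ∈ Icc xl xr, HasDerivWithinAt B (B' σ) (Icc xl xr) σ)
    (hQ : ∀ σ ∈ Icc xl xr, HasDerivWithinAt Q (Q' σ) (Icc xl xr) σ)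
    (hF : ∀ σ ∈ Icc xl xr, HasDerivWithinAt F (F' σ) (Icc xl xr) σ)
    (hB'c : ContinuousOn B' (Icc xl xr)) (hQ'c : ContinuousOn Q' (Icc xl xr))
    (hF'c : ContinuousOn F' (Icc xl xr))
    (hode : ∀ σ ∈ Icc xl xr, u'' σ = 2 * (Q σ * u σ - B σ * u' σ - F σ)) :
    ∃ C > 0, ∀ a b t, Icc a b ⊆ Icc xl xr → t ∈ Ioo a b →
      |u' t - deriv (modInterp u B Q F a b) t| ≤ C * (b - a) ^ 2 := by
  have cont : ∀ {φ φ' : ℝ → ℝ}, (∀ σ ∈ Icc xl xr, HasDerivWithinAt φ (φ' σ) (Icc xl xr) σ) →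
      ContinuousOn φ (Icc xl xr) := fun h σ hσ => (h σ hσ).continuousWithinAt
  obtain ⟨M, hM0, hM⟩ := isCompact_Icc.exists_pos_bound_of_continuousOn_list
    [u, u', u'', u''', B, Q, B', Q', F'] (by
      simp only [List.mem_cons, List.not_mem_nil, or_false, forall_eq_or_imp, forall_eq]
      exact ⟨cont hu, cont hu', cont hu'', hu'''c, cont hB, cont hQ, hB'c, hQ'c, hF'c⟩)
  refine ⟨M + M * M * (xr - xl + 1) + M * (3 * M + 1),
    add_pos (add_pos hM0 (mul_pos (mul_pos hM0 hM0) (by linarith))) (by positivity), ?_⟩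
  intro a b t hs ht
  have hab : a ≤ b := (ht.1.trans ht.2).le
  refine (abs_deriv_sub_deriv_modInterp_le hu hu' hu'' hB hQ hF hM hode hs ht).trans ?_
  have hxl := (hs (left_mem_Icc.2 hab)).1
  have hxr := (hs (right_mem_Icc.2 hab)).2
  have := sub_nonneg.2 hab
  gcongr

/-- For the Sturm–Liouville equation `β u'' + β' u' − q u + f = 0` on
`[x_l, x_r]` with `β ∈ C²`, `β ≥ β₀ > 0`, `q, f ∈ C¹` and `u ∈ C³`, there is a constant
`C > 0` such that for every partition `x_l = x 0 < x 1 < ⋯ < x n = x_r` with mesh size `h`,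
the piecewise modified (bubble-corrected) interpolant `v_h^{new}` satisfies the derivative
bound `|u' t − (v_h^{new})' t| ≤ C h²` in the interior of every element. -/
theorem modified_interpolant_second_order_derivative_mesh
    (xl xr β₀ : ℝ) (hlr : xl < xr) (hβ₀ : 0 < β₀)
    (β β' β'' q q' f f' u u' u'' u''' : ℝ → ℝ)
    (hβd : ∀ t ∈ Set.Icc xl xr, HasDerivWithinAt β (β' t) (Set.Icc xl xr) t)
    (hβd2 : ∀ t ∈ Set.Icc xl xr, HasDerivWithinAt β' (β'' t) (Set.Icc xl xr) t)
    (hβ''c : ContinuousOn β'' (Set.Icc xl xr))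
    (hβlb : ∀ t ∈ Set.Icc xl xr, β₀ ≤ β t)
    (hqd : ∀ t ∈ Set.Icc xl xr, HasDerivWithinAt q (q' t) (Set.Icc xl xr) t)
    (hq'c : ContinuousOn q' (Set.Icc xl xr))
    (hfd : ∀ t ∈ Set.Icc xl xr, HasDerivWithinAt f (f' t) (Set.Icc xl xr) t)
    (hf'c : ContinuousOn f' (Set.Icc xl xr))
    (hu' : ∀ t ∈ Set.Icc xl xr, HasDerivWithinAt u (u' t) (Set.Icc xl xr) t)
    (hu'' : ∀ t ∈ Set.Icc xl xr, HasDerivWithinAt u' (u'' t) (Set.Icc xl xr) t)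
    (hu''' : ∀ t ∈ Set.Icc xl xr, HasDerivWithinAt u'' (u''' t) (Set.Icc xl xr) t)
    (hu'''c : ContinuousOn u''' (Set.Icc xl xr))
    (hode : ∀ t ∈ Set.Icc xl xr, β t * u'' t + β' t * u' t - q t * u t + f t = 0) :
    ∃ C > 0, ∀ (n : ℕ) (hn : 1 ≤ n) (x : ℕ → ℝ),
      x 0 = xl → x n = xr → (∀ k < n, x k < x (k + 1)) →
      ∀ H : ℝ, H = (Finset.range n).sup' (Finset.nonempty_range_iff.mpr (by omega))
          (fun k => x (k + 1) - x k) →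
      ∀ vh : ℝ → ℝ,
        (∀ k < n, ∀ t ∈ Set.Icc (x k) (x (k + 1)),
          vh t = (u (x k) * (x (k + 1) - t) / (x (k + 1) - x k)
              + u (x (k + 1)) * (t - x k) / (x (k + 1) - x k))
            - β' t / (2 * β t) * (t - x k) * (t - x (k + 1))
              * ((u (x (k + 1)) - u (x k)) / (x (k + 1) - x k))
            + q t / (2 * β t) * (t - x k) * (t - x (k + 1))
              * (u (x k) * (x (k + 1) - t) / (x (k + 1) - x k)
                + u (x (k + 1)) * (t - x k) / (x (k + 1) - x k))
            - f t / (2 * β t) * (t - x k) * (t - x (k + 1))) →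
        ∀ k < n, ∀ t ∈ Set.Ioo (x k) (x (k + 1)),
          |u' t - deriv vh t| ≤ C * H ^ 2 := by
  have h2β0 : ∀ t ∈ Icc xl xr, 2 * β t ≠ 0 := fun t ht => by
    have := hβ₀.trans_le (hβlb t ht); positivity
  have h2β : ∀ t ∈ Icc xl xr, HasDerivWithinAt (fun τ => 2 * β τ) (2 * β' t) (Icc xl xr) t :=
    fun t ht => (hβd t ht).const_mul 2
  have h2β' : ContinuousOn (fun t => 2 * β' t) (Icc xl xr) :=
    continuousOn_const.mul fun t ht => (hβd2 t ht).continuousWithinAt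
  obtain ⟨B', hB, hB'c⟩ := exists_hasDerivWithinAt_div hβd2 hβ''c h2β h2β' h2β0
  obtain ⟨Q', hQ, hQ'c⟩ := exists_hasDerivWithinAt_div hqd hq'c h2β h2β' h2β0
  obtain ⟨F', hF, hF'c⟩ := exists_hasDerivWithinAt_div hfd hf'c h2β h2β' h2β0
  obtain ⟨C, hC, hCbound⟩ := exists_abs_deriv_sub_deriv_modInterp_le hlr hu' hu'' hu''' hu'''c
    hB hQ hF hB'c hQ'c hF'c fun t ht => by
      field_simp [(hβ₀.trans_le (hβlb t ht)).ne']; linear_combination hode t ht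
  refine ⟨C, hC, fun n hn x hx0 hxn hx H hH vh hvh k hk t ht => ?_⟩
  have hsub : Icc (x k) (x (k + 1)) ⊆ Icc xl xr :=
    hx0 ▸ hxn ▸ Icc_succ_subset_Icc_of_le_succ (fun k hk => (hx k hk).le) hk
  have hmesh : x (k + 1) - x k ≤ H :=
    hH ▸ Finset.le_sup' (fun k => x (k + 1) - x k) (Finset.mem_range.2 hk)
  have hvh' : vh =ᶠ[𝓝 t] modInterp u (fun τ => β' τ / (2 * β τ)) (fun τ => q τ / (2 * β τ))
      (fun τ => f τ / (2 * β τ)) (x k) (x (k + 1)) :=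
    eventually_of_mem (Ioo_mem_nhds ht.1 ht.2) fun τ hτ => by
      rw [hvh k hk τ (Ioo_subset_Icc_self hτ), modInterp, bubbleCoeff, linInterp, slope_def_field]
      ring
  rw [hvh'.deriv_eq]
  refine (hCbound _ _ t hsub ht).trans ?_
  have := sub_nonneg.2 (hx k hk).le
  gcongr
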